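/- arXiv:2409.16499 — 3 statements merged into one kernel-verified Lean document; each statement's English description precedes it below -/
import Mathlib

section
/- Let L ≥ 2 be even and n ≥ 1. Let G, Ĝ ∈ ℝ^{p×pL}, let H⁻ ∈ ℝ^{(pL/2)×(pL/2)} be the block Hankel matrix 𝓗(G) with its last p columns removed, and let Ĥ⁻ be 𝓗(Ĝ) with its last p columns removed. Suppose rank(H⁻) ≤ n, and suppose L̂ is a minimizer of ‖Ĥ⁻ − M‖_F over all matrices M ∈ ℝ^{(pL/2)×(pL/2)} with rank(M) ≤ n. Then ‖H⁻ − L̂‖_F ≤ √(2L) · ‖G − Ĝ‖_F. -/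
open Matrix Finset

noncomputable section

/-- Frobenius norm of a real matrix. -/
def frobNorm {m k : Type*} [Fintype m] [Fintype k] (M : Matrix m k ℝ) : ℝ :=
  Real.sqrt (∑ i, ∑ j, M i j ^ 2)

/-- The block Hankel matrix of `M = [M_1, …, M_{2m}] ∈ ℝ^{p × 2mp}`: its `(i,j)`
`p × p` block (zero-based) is `M_{i+j+1}` (one-based: `M_{i+j-1}`). -/
def hankel {p m : ℕ} (M : Matrix (Fin p) (Fin (2 * m) × Fin p) ℝ) :
    Matrix (Fin m × Fin p) (Fin (m + 1) × Fin p) ℝ :=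
  Matrix.of fun r c =>
    M r.2 (⟨r.1.1 + c.1.1, by have h1 := r.1.isLt; have h2 := c.1.isLt; omega⟩, c.2)

/-- The block Hankel matrix with its last `p` columns (block column `m`) removed. -/
def hankelMinus {p m : ℕ} (M : Matrix (Fin p) (Fin (2 * m) × Fin p) ℝ) :
    Matrix (Fin m × Fin p) (Fin m × Fin p) ℝ :=
  Matrix.of fun r c => hankel M r (Fin.castSucc c.1, c.2)

attribute [local instance] Matrix.frobeniusNormedAddCommGroup

lemma frobNorm_eq_norm {m k : Type*} [Fintype m] [Fintype k] (M : Matrix m k ℝ) :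
    frobNorm M = ‖M‖ := by
  rw [Matrix.frobenius_norm_def, frobNorm, Real.sqrt_eq_rpow]
  congr 1
  apply Finset.sum_congr rfl; intro i _
  apply Finset.sum_congr rfl; intro j _
  rw [Real.norm_eq_abs, Real.rpow_two, sq_abs]

lemma frobNorm_triangle {m k : Type*} [Fintype m] [Fintype k] (A B C : Matrix m k ℝ) :
    frobNorm (A - C) ≤ frobNorm (A - B) + frobNorm (B - C) := by
  simp only [frobNorm_eq_norm]
  exact norm_sub_le_norm_sub_add_norm_sub A B C

lemma frobNorm_sub_rev {m k : Type*} [Fintype m] [Fintype k] (A B : Matrix m k ℝ) :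
    frobNorm (A - B) = frobNorm (B - A) := by
  simp only [frobNorm_eq_norm]; exact norm_sub_rev A B

lemma hankelMinus_sub {p m : ℕ} (A B : Matrix (Fin p) (Fin (2 * m) × Fin p) ℝ) :
    hankelMinus A - hankelMinus B = hankelMinus (A - B) := by
  ext r c
  simp [hankelMinus, hankel]

/-- The index embedding `c1 ↦ r1 + c1` of `Fin m` into `Fin (2m)`. -/
def eIdx {m : ℕ} (r1 c1 : Fin m) : Fin (2 * m) :=
  ⟨r1.1 + c1.1, by have := r1.isLt; have := c1.isLt; omega⟩

lemma eIdx_inj {m : ℕ} (r1 : Fin m) : Function.Injective (eIdx r1) := by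
  intro a b h
  simp only [eIdx, Fin.mk.injEq] at h
  exact Fin.ext (by omega)

lemma hankelMinus_apply {p m : ℕ} (D : Matrix (Fin p) (Fin (2 * m) × Fin p) ℝ)
    (r c : Fin m × Fin p) :
    hankelMinus D r c = D r.2 (eIdx r.1 c.1, c.2) := by
  simp only [hankelMinus, hankel, Matrix.of_apply, eIdx]
  congr 1

lemma sum_sq_hankelMinus_le {p m : ℕ} (D : Matrix (Fin p) (Fin (2 * m) × Fin p) ℝ) :
    (∑ r, ∑ c, hankelMinus D r c ^ 2) ≤ m * ∑ i, ∑ j, D i j ^ 2 := by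
  have key : ∀ (i : Fin p) (r1 : Fin m),
      (∑ c1 : Fin m, ∑ j : Fin p, D i (eIdx r1 c1, j) ^ 2)
        ≤ ∑ k : Fin (2 * m), ∑ j : Fin p, D i (k, j) ^ 2 := by
    intro i r1
    have himg : ∑ x ∈ Finset.univ.image (eIdx r1), (∑ j : Fin p, D i (x, j) ^ 2)
        = ∑ c1 : Fin m, ∑ j : Fin p, D i (eIdx r1 c1, j) ^ 2 :=
      Finset.sum_image (fun a _ b _ h => eIdx_inj r1 h)
    rw [← himg]
    apply Finset.sum_le_sum_of_subset_of_nonneg (Finset.subset_univ _)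
    intro k _ _
    positivity
  calc (∑ r, ∑ c, hankelMinus D r c ^ 2)
      = ∑ r1 : Fin m, ∑ i : Fin p, ∑ c1 : Fin m, ∑ j : Fin p, D i (eIdx r1 c1, j) ^ 2 := by
        simp_rw [Fintype.sum_prod_type, hankelMinus_apply]
    _ ≤ ∑ r1 : Fin m, ∑ i : Fin p, ∑ k : Fin (2 * m), ∑ j : Fin p, D i (k, j) ^ 2 := by
        apply Finset.sum_le_sum; intro r1 _
        apply Finset.sum_le_sum; intro i _
        exact key i r1
    _ = m * ∑ i, ∑ j, D i j ^ 2 := by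
        rw [Finset.sum_const, Finset.card_univ, Fintype.card_fin, nsmul_eq_mul]
        congr 1
        apply Finset.sum_congr rfl; intro i _
        rw [Fintype.sum_prod_type]

lemma frobNorm_hankelMinus_le {p m : ℕ} (D : Matrix (Fin p) (Fin (2 * m) × Fin p) ℝ) :
    frobNorm (hankelMinus D) ≤ Real.sqrt m * frobNorm D := by
  rw [frobNorm, frobNorm, ← Real.sqrt_mul (by positivity)]
  exact Real.sqrt_le_sqrt (sum_sq_hankelMinus_le D)

/-- **Low-rank approximation of the perturbed Hankel matrix.** If `rank H⁻ ≤ n`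
and `L̂` is a best rank-`n` (Frobenius) approximation of `Ĥ⁻`, then
`‖H⁻ − L̂‖_F ≤ √(2L) ‖G − Ĝ‖_F`, where `L = 2m`. -/
theorem hankel_low_rank_approximation {p m n : ℕ} (hp : 1 ≤ p) (hm : 1 ≤ m) (hn : 1 ≤ n)
    (G Ghat : Matrix (Fin p) (Fin (2 * m) × Fin p) ℝ)
    (Lhat : Matrix (Fin m × Fin p) (Fin m × Fin p) ℝ)
    (hrankH : (hankelMinus G).rank ≤ n)
    (hrankLhat : Lhat.rank ≤ n)
    (hbest : ∀ M : Matrix (Fin m × Fin p) (Fin m × Fin p) ℝ, M.rank ≤ n →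
      frobNorm (hankelMinus Ghat - Lhat) ≤ frobNorm (hankelMinus Ghat - M)) :
    frobNorm (hankelMinus G - Lhat) ≤
      Real.sqrt (2 * (2 * m : ℝ)) * frobNorm (G - Ghat) := by
  have h1 := frobNorm_triangle (hankelMinus G) (hankelMinus Ghat) Lhat
  have h3 : frobNorm (hankelMinus G - hankelMinus Ghat) ≤ Real.sqrt m * frobNorm (G - Ghat) := by
    rw [hankelMinus_sub]; exact frobNorm_hankelMinus_le _
  have h2 : frobNorm (hankelMinus Ghat - Lhat)
      ≤ frobNorm (hankelMinus G - hankelMinus Ghat) := by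
    calc frobNorm (hankelMinus Ghat - Lhat)
        ≤ frobNorm (hankelMinus Ghat - hankelMinus G) := hbest _ hrankH
      _ = frobNorm (hankelMinus G - hankelMinus Ghat) := frobNorm_sub_rev _ _
  have hsqrt : Real.sqrt (2 * (2 * m : ℝ)) = 2 * Real.sqrt m := by
    rw [show (2 : ℝ) * (2 * m) = 2 ^ 2 * m by ring, Real.sqrt_mul (by positivity),
      Real.sqrt_sq (by norm_num)]
  rw [hsqrt]
  linarith

end
end

section
/- Fix a deterministic input sequence with ‖u_t‖₂ ≤ β for all t, and assume the noise assumption and the stability assumption. Then for every τ ≥ L, the variance of the effective noise satisfies Var(ζ_{τ+1}) = E[ζ_{τ+1}²] − (E[ζ_{τ+1}])² ≤ ( ‖Σ_w‖ ‖F‖_F² + ‖C Aᴸ‖² ‖Γ_w^∞‖ ) β² + σ_z². -/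
open MeasureTheory ProbabilityTheory Matrix Finset

noncomputable section

/-- Spectral (ℓ²-operator) norm of a real matrix. -/
def specNorm {m k : Type*} [Fintype m] [Fintype k] [DecidableEq k]
    (M : Matrix m k ℝ) : ℝ :=
  ‖LinearMap.toContinuousLinearMap (Matrix.toEuclideanLin M)‖

/-- Euclidean norm of a vector. -/
def vecNorm {k : Type*} [Fintype k] (v : k → ℝ) : ℝ :=
  Real.sqrt (∑ i, v i ^ 2)

/-- Ellipsoidal norm `‖v‖_M = √(vᵀ M v)`. -/
def mnorm {k : Type*} [Fintype k] (M : Matrix k k ℝ) (v : k → ℝ) : ℝ :=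
  Real.sqrt (v ⬝ᵥ (M *ᵥ v))

/-- Kronecker product of two vectors. -/
def vkron {a b : Type*} (x : a → ℝ) (y : b → ℝ) : a × b → ℝ := fun i => x i.1 * y i.2

/-- Smallest eigenvalue of a symmetric matrix, as the infimum of the Rayleigh
quotient over unit vectors. -/
def lambdaMin {κ : Type*} [Fintype κ] (M : Matrix κ κ ℝ) : ℝ :=
  sInf {r : ℝ | ∃ v : κ → ℝ, ∑ i, v i ^ 2 = 1 ∧ r = v ⬝ᵥ (M *ᵥ v)}

/-- The history vector `ū_t = (u_t, u_{t-1}, …, u_{t-L+1})`, block `i` being `u_{t-i}`. -/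
def ubar {p : ℕ} (L : ℕ) (u : ℕ → Fin p → ℝ) (t : ℕ) : Fin L × Fin p → ℝ :=
  fun i => u (t - (i.1 : ℕ)) i.2

/-- The state sequence of the system `x_{t+1} = A x_t + B u_t + w_t`, `x_0 = 0`. -/
def state {Ω : Type*} {n p : ℕ} (A : Matrix (Fin n) (Fin n) ℝ)
    (B : Matrix (Fin n) (Fin p) ℝ) (u : ℕ → Fin p → ℝ) (w : ℕ → Ω → Fin n → ℝ) :
    ℕ → Ω → Fin n → ℝ
  | 0 => fun _ => 0
  | t + 1 => fun ω => A *ᵥ state A B u w t ω + B *ᵥ u t + w t ω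

/-- The output `y_t = u_tᵀ C x_t + z_t`. -/
def output {Ω : Type*} {n p : ℕ} (A : Matrix (Fin n) (Fin n) ℝ)
    (B : Matrix (Fin n) (Fin p) ℝ) (C : Matrix (Fin p) (Fin n) ℝ)
    (u : ℕ → Fin p → ℝ) (w : ℕ → Ω → Fin n → ℝ) (z : ℕ → Ω → ℝ) (t : ℕ) (ω : Ω) : ℝ :=
  u t ⬝ᵥ (C *ᵥ state A B u w t ω) + z t ω

/-- Index type for the combined noise family `(w_t) ∪ (z_t)`. -/
abbrev NoiseType (n : ℕ) : ℕ ⊕ ℕ → Type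
  | Sum.inl _ => Fin n → ℝ
  | Sum.inr _ => ℝ

instance (n : ℕ) : ∀ i, MeasurableSpace (NoiseType n i)
  | Sum.inl _ => inferInstanceAs (MeasurableSpace (Fin n → ℝ))
  | Sum.inr _ => inferInstanceAs (MeasurableSpace ℝ)

/-- The combined noise family. -/
def noiseFun {Ω : Type*} {n : ℕ} (w : ℕ → Ω → Fin n → ℝ) (z : ℕ → Ω → ℝ) :
    ∀ i : ℕ ⊕ ℕ, Ω → NoiseType n i
  | Sum.inl t => w t
  | Sum.inr t => z t

/-- Noise assumption: the family `(w_t) ∪ (z_t)` is mutually independent, the `w_t`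
are identically distributed, centered, with covariance `Sw`, and the `z_t` are
identically distributed, centered, with variance `σz²`. -/
structure NoiseAssumption {Ω : Type*} [MeasurableSpace Ω] {n : ℕ} (μ : Measure Ω)
    (w : ℕ → Ω → Fin n → ℝ) (z : ℕ → Ω → ℝ)
    (Sw : Matrix (Fin n) (Fin n) ℝ) (σz : ℝ) : Prop where
  meas_w : ∀ t, Measurable (w t)
  meas_z : ∀ t, Measurable (z t)
  indep : iIndepFun (noiseFun w z) μ
  ident_w : ∀ s t, IdentDistrib (w s) (w t) μ μ
  ident_z : ∀ s t, IdentDistrib (z s) (z t) μ μ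
  int_w : ∀ t i, Integrable (fun ω => w t ω i) μ
  mean_w : ∀ t i, ∫ ω, w t ω i ∂μ = 0
  int_ww : ∀ t i j, Integrable (fun ω => w t ω i * w t ω j) μ
  cov_w : ∀ t i j, ∫ ω, w t ω i * w t ω j ∂μ = Sw i j
  int_z : ∀ t, Integrable (z t) μ
  mean_z : ∀ t, ∫ ω, z t ω ∂μ = 0
  int_zz : ∀ t, Integrable (fun ω => z t ω ^ 2) μ
  var_z : ∀ t, ∫ ω, z t ω ^ 2 ∂μ = σz ^ 2

/-- The infinite-horizon controllability Gramian `Γ_w^∞ = Σ_{i=0}^∞ Aⁱ Sw (Aⁱ)ᵀ`. -/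
def gramInf {n : ℕ} (A Sw : Matrix (Fin n) (Fin n) ℝ) : Matrix (Fin n) (Fin n) ℝ :=
  ∑' i : ℕ, A ^ i * Sw * (A ^ i)ᵀ

/-- The Markov parameter matrix `G = [CB, CAB, …, CA^{L-1}B]`, block `k` being `C Aᵏ B`. -/
def markovG {n p : ℕ} (L : ℕ) (A : Matrix (Fin n) (Fin n) ℝ)
    (B : Matrix (Fin n) (Fin p) ℝ) (C : Matrix (Fin p) (Fin n) ℝ) :
    Matrix (Fin p) (Fin L × Fin p) ℝ :=
  Matrix.of fun i k => (C * A ^ (k.1 : ℕ) * B) i k.2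

/-- The matrix `F = [C, CA, …, CA^{L-1}]`, block `k` being `C Aᵏ`. -/
def markovF {n p : ℕ} (L : ℕ) (A : Matrix (Fin n) (Fin n) ℝ)
    (C : Matrix (Fin p) (Fin n) ℝ) : Matrix (Fin p) (Fin L × Fin n) ℝ :=
  Matrix.of fun i k => (C * A ^ (k.1 : ℕ)) i k.2

/-- Column-major vectorization of a `p × κ` matrix: `vec(M)_(a,b) = M b a`,
so that `uᵀ M ū = (ū ⊗ u) ⬝ᵥ vec(M)`. -/
def vecOf {p : ℕ} {κ : Type*} (M : Matrix (Fin p) κ ℝ) : κ × Fin p → ℝ :=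
  fun i => M i.2 i.1

/-- The design matrix `Ũ` whose row `s` (corresponding to `t = L+1+s`) is
`(ū_{t-1} ⊗ u_t)ᵀ`. -/
def designU {p : ℕ} (L T : ℕ) (u : ℕ → Fin p → ℝ) :
    Matrix (Fin (T - L)) ((Fin L × Fin p) × Fin p) ℝ :=
  Matrix.of fun s => vkron (ubar L u (L + (s : ℕ))) (u (L + (s : ℕ) + 1))

/-- The noise history vector `w̄_t = (w_t, w_{t-1}, …, w_{t-L+1})`. -/
def wbar {Ω : Type*} {n : ℕ} (L : ℕ) (w : ℕ → Ω → Fin n → ℝ) (t : ℕ) (ω : Ω) :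
    Fin L × Fin n → ℝ :=
  fun i => w (t - (i.1 : ℕ)) ω i.2

/-- The effective noise
`ζ_t = (w̄_{t-1} ⊗ u_t)ᵀ vec(F) + u_tᵀ C Aᴸ x_{t-L} + z_t`. -/
def zeta {Ω : Type*} {n p : ℕ} (L : ℕ) (A : Matrix (Fin n) (Fin n) ℝ)
    (B : Matrix (Fin n) (Fin p) ℝ) (C : Matrix (Fin p) (Fin n) ℝ)
    (u : ℕ → Fin p → ℝ) (w : ℕ → Ω → Fin n → ℝ) (z : ℕ → Ω → ℝ)
    (t : ℕ) (ω : Ω) : ℝ :=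
  vkron (wbar L w (t - 1) ω) (u t) ⬝ᵥ vecOf (markovF L A C)
    + u t ⬝ᵥ ((C * A ^ L) *ᵥ state A B u w (t - L) ω)
    + z t ω

/-!
Unrolling the recursion, `ζ_{τ+1}` is a deterministic constant plus
`∑_{i ≤ τ} ⟨(C Aⁱ)ᵀ u_{τ+1}, w_{τ-i}⟩ + z_{τ+1}`. These summands are pairwise independent,
so the variance is `∑_{i ≤ τ} hᵢᵀ Σ_w hᵢ + σ_z²` with `hᵢ = (C Aⁱ)ᵀ u_{τ+1}`. The lags `i < L`
contribute at most `‖Σ_w‖ ‖F‖_F² ‖u‖²` by Cauchy–Schwarz, and the lags `i = L + j` have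
`h_{L+j} = (Aʲ)ᵀ (C Aᴸ)ᵀ u`, so their nonnegative contributions are partial sums of the
quadratic form of `Γ_w^∞`, a series that converges because `‖Aʲ‖` decays geometrically.
-/
section Norms

variable {m k : Type*} [Fintype m] [Fintype k]

lemma vecNorm_eq_norm (v : k → ℝ) : vecNorm v = ‖WithLp.toLp 2 v‖ := by
  simp [vecNorm, EuclideanSpace.norm_eq]

lemma vecNorm_nonneg (v : k → ℝ) : 0 ≤ vecNorm v := Real.sqrt_nonneg _

lemma vecNorm_sq (v : k → ℝ) : vecNorm v ^ 2 = ∑ i, v i ^ 2 :=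
  Real.sq_sqrt (by positivity)

lemma frobNorm_sq (M : Matrix m k ℝ) : frobNorm M ^ 2 = ∑ i, ∑ j, M i j ^ 2 :=
  Real.sq_sqrt (by positivity)

lemma frobNorm_transpose (M : Matrix m k ℝ) : frobNorm Mᵀ = frobNorm M := by
  rw [frobNorm, frobNorm, sum_comm]; rfl

lemma vecNorm_mulVec_sq_le_frobNorm_sq (M : Matrix m k ℝ) (v : k → ℝ) :
    vecNorm (M *ᵥ v) ^ 2 ≤ frobNorm M ^ 2 * vecNorm v ^ 2 := by
  rw [vecNorm_sq, vecNorm_sq, frobNorm_sq, sum_mul]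
  exact sum_le_sum fun i _ => sum_mul_sq_le_sq_mul_sq _ _ _

lemma abs_dotProduct_le_vecNorm_mul (v x : k → ℝ) : |v ⬝ᵥ x| ≤ vecNorm v * vecNorm x := by
  have h := abs_real_inner_le_norm (WithLp.toLp 2 v) (WithLp.toLp 2 x)
  rwa [EuclideanSpace.inner_toLp_toLp, dotProduct_comm, ← vecNorm_eq_norm,
    ← vecNorm_eq_norm] at h

lemma dotProduct_le_vecNorm_mul (v x : k → ℝ) : v ⬝ᵥ x ≤ vecNorm v * vecNorm x :=
  (le_abs_self _).trans (abs_dotProduct_le_vecNorm_mul v x)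

variable [DecidableEq k]

lemma vecNorm_single (i : k) : vecNorm (Pi.single i 1) = 1 := by
  simp [vecNorm, Pi.single_apply]

lemma specNorm_nonneg (M : Matrix m k ℝ) : 0 ≤ specNorm M := norm_nonneg _

lemma vecNorm_mulVec_le (M : Matrix m k ℝ) (v : k → ℝ) :
    vecNorm (M *ᵥ v) ≤ specNorm M * vecNorm v := by
  rw [vecNorm_eq_norm, vecNorm_eq_norm]
  exact M.l2_opNorm_mulVec (WithLp.toLp 2 v)

lemma dotProduct_mulVec_le (M : Matrix k k ℝ) (v : k → ℝ) :
    v ⬝ᵥ (M *ᵥ v) ≤ specNorm M * vecNorm v ^ 2 :=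
  calc v ⬝ᵥ (M *ᵥ v) ≤ vecNorm v * vecNorm (M *ᵥ v) := dotProduct_le_vecNorm_mul _ _
    _ ≤ vecNorm v * (specNorm M * vecNorm v) := by
      gcongr
      · exact vecNorm_nonneg v
      · exact vecNorm_mulVec_le M v
    _ = specNorm M * vecNorm v ^ 2 := by ring

lemma specNorm_mul_le {l : Type*} [Fintype l] [DecidableEq l] (M : Matrix m k ℝ)
    (N : Matrix k l ℝ) : specNorm (M * N) ≤ specNorm M * specNorm N :=
  M.l2_opNorm_mul N

variable [DecidableEq m]

lemma specNorm_transpose (M : Matrix m k ℝ) : specNorm Mᵀ = specNorm M := by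
  rw [specNorm, specNorm, ← conjTranspose_eq_transpose_of_trivial]
  exact M.l2_opNorm_conjTranspose

lemma abs_apply_le_specNorm (M : Matrix m k ℝ) (i : m) (j : k) : |M i j| ≤ specNorm M := by
  have h := abs_dotProduct_le_vecNorm_mul (Pi.single i 1) (M *ᵥ Pi.single j 1)
  rw [vecNorm_single, one_mul] at h
  calc |M i j| = |Pi.single i 1 ⬝ᵥ (M *ᵥ Pi.single j 1)| := by simp
    _ ≤ vecNorm (M *ᵥ Pi.single j 1) := h
    _ ≤ specNorm M := by simpa [vecNorm_single] using vecNorm_mulVec_le M (Pi.single j 1)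

end Norms

section Gramian

variable {n : ℕ} {A S : Matrix (Fin n) (Fin n) ℝ}

lemma summable_of_specNorm_le {m k : Type*} [Fintype m] [Fintype k] [DecidableEq m]
    [DecidableEq k] {f : ℕ → Matrix m k ℝ} {g : ℕ → ℝ} (hg : Summable g)
    (hfg : ∀ j, specNorm (f j) ≤ g j) : Summable f :=
  Pi.summable.mpr fun i => Pi.summable.mpr fun l =>
    hg.of_norm_bounded fun j => (abs_apply_le_specNorm (f j) i l).trans (hfg j)

lemma summable_pow_mul_mul_transpose {ρ φ : ℝ} (hρ₀ : 0 ≤ ρ) (hρ₁ : ρ < 1)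
    (hA : ∀ k : ℕ, specNorm (A ^ k) ≤ φ * ρ ^ k) (S : Matrix (Fin n) (Fin n) ℝ) :
    Summable fun j : ℕ => A ^ j * S * (A ^ j)ᵀ := by
  refine summable_of_specNorm_le
    ((summable_geometric_of_lt_one (r := ρ ^ 2) (by positivity) (by nlinarith)).mul_left
      (specNorm S * φ ^ 2)) fun j => ?_
  have hAj : specNorm (A ^ j) ^ 2 ≤ (φ * ρ ^ j) ^ 2 :=
    pow_le_pow_left₀ (specNorm_nonneg _) (hA j) 2
  calc specNorm (A ^ j * S * (A ^ j)ᵀ)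
      ≤ specNorm (A ^ j) * specNorm S * specNorm (A ^ j) := by
        refine (specNorm_mul_le _ _).trans ?_
        rw [specNorm_transpose]
        gcongr
        · exact specNorm_nonneg _
        · exact specNorm_mul_le _ _
    _ = specNorm S * specNorm (A ^ j) ^ 2 := by ring
    _ ≤ specNorm S * (φ * ρ ^ j) ^ 2 := by gcongr; exact specNorm_nonneg _
    _ = specNorm S * φ ^ 2 * (ρ ^ 2) ^ j := by ring

lemma dotProduct_mulVec_pow_mul_mul_transpose (j : ℕ) (v : Fin n → ℝ) :
    v ⬝ᵥ ((A ^ j * S * (A ^ j)ᵀ) *ᵥ v) = ((A ^ j)ᵀ *ᵥ v) ⬝ᵥ (S *ᵥ ((A ^ j)ᵀ *ᵥ v)) := by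
  rw [← mulVec_mulVec, ← mulVec_mulVec, dotProduct_mulVec, ← mulVec_transpose]

lemma sum_range_le_dotProduct_gramInf (hS : ∀ x, 0 ≤ x ⬝ᵥ (S *ᵥ x))
    (hsum : Summable fun j : ℕ => A ^ j * S * (A ^ j)ᵀ) (v : Fin n → ℝ) (N : ℕ) :
    ∑ j ∈ range N, ((A ^ j)ᵀ *ᵥ v) ⬝ᵥ (S *ᵥ ((A ^ j)ᵀ *ᵥ v))
      ≤ v ⬝ᵥ (gramInf A S *ᵥ v) := by
  have hquad : Continuous fun M : Matrix (Fin n) (Fin n) ℝ => v ⬝ᵥ (M *ᵥ v) :=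
    continuous_const.dotProduct (continuous_id.matrix_mulVec continuous_const)
  have h : HasSum (fun j => v ⬝ᵥ ((A ^ j * S * (A ^ j)ᵀ) *ᵥ v)) (v ⬝ᵥ (gramInf A S *ᵥ v)) :=
    hsum.hasSum.map ((dotProductBilin ℝ ℝ v).toAddMonoidHom.comp
      (mulVec.addMonoidHomLeft v)) hquad
  simp only [dotProduct_mulVec_pow_mul_mul_transpose] at h
  exact sum_le_hasSum _ (fun j _ => hS _) h

end Gramian

section LagSums

variable {n p : ℕ} (A S : Matrix (Fin n) (Fin n) ℝ) (C : Matrix (Fin p) (Fin n) ℝ)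
  (x : Fin p → ℝ)

lemma frobNorm_markovF_sq (L : ℕ) :
    frobNorm (markovF L A C) ^ 2 = ∑ i ∈ range L, frobNorm (C * A ^ i) ^ 2 := by
  simp only [frobNorm_sq, markovF, of_apply, Fintype.sum_prod_type]
  rw [sum_comm, ← Fin.sum_univ_eq_sum_range (fun i => ∑ b, ∑ a, (C * A ^ i) b a ^ 2)]

lemma sum_range_dotProduct_mulVec_le_frobNorm (L : ℕ) :
    ∑ i ∈ range L, ((C * A ^ i)ᵀ *ᵥ x) ⬝ᵥ (S *ᵥ ((C * A ^ i)ᵀ *ᵥ x))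
      ≤ specNorm S * frobNorm (markovF L A C) ^ 2 * vecNorm x ^ 2 := by
  rw [frobNorm_markovF_sq, mul_assoc, sum_mul, mul_sum]
  refine sum_le_sum fun i _ => (dotProduct_mulVec_le S _).trans ?_
  rw [← frobNorm_transpose]
  gcongr
  · exact specNorm_nonneg S
  · exact vecNorm_mulVec_sq_le_frobNorm_sq _ x

lemma sum_range_dotProduct_mulVec_le_gramInf (hS : ∀ y, 0 ≤ y ⬝ᵥ (S *ᵥ y))
    (hsum : Summable fun j : ℕ => A ^ j * S * (A ^ j)ᵀ) (L N : ℕ) :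
    ∑ j ∈ range N,
        ((C * A ^ (L + j))ᵀ *ᵥ x) ⬝ᵥ (S *ᵥ ((C * A ^ (L + j))ᵀ *ᵥ x))
      ≤ specNorm (C * A ^ L) ^ 2 * specNorm (gramInf A S) * vecNorm x ^ 2 := by
  set v := (C * A ^ L)ᵀ *ᵥ x
  have hv : vecNorm v ≤ specNorm (C * A ^ L) * vecNorm x := by
    simpa only [specNorm_transpose] using vecNorm_mulVec_le (C * A ^ L)ᵀ x
  have hshift : ∀ j, (C * A ^ (L + j))ᵀ *ᵥ x = (A ^ j)ᵀ *ᵥ v := fun j => by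
    rw [pow_add, ← Matrix.mul_assoc, transpose_mul, ← mulVec_mulVec]
  simp only [hshift]
  calc _ ≤ v ⬝ᵥ (gramInf A S *ᵥ v) := sum_range_le_dotProduct_gramInf hS hsum v N
    _ ≤ specNorm (gramInf A S) * vecNorm v ^ 2 := dotProduct_mulVec_le _ v
    _ ≤ specNorm (gramInf A S) * (specNorm (C * A ^ L) * vecNorm x) ^ 2 := by
        gcongr
        · exact specNorm_nonneg _
        · exact vecNorm_nonneg v
    _ = specNorm (C * A ^ L) ^ 2 * specNorm (gramInf A S) * vecNorm x ^ 2 := by ring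

lemma sum_range_dotProduct_mulVec_le (hS : ∀ y, 0 ≤ y ⬝ᵥ (S *ᵥ y))
    (hsum : Summable fun j : ℕ => A ^ j * S * (A ^ j)ᵀ) {L N : ℕ} (hLN : L ≤ N) :
    ∑ i ∈ range N, ((C * A ^ i)ᵀ *ᵥ x) ⬝ᵥ (S *ᵥ ((C * A ^ i)ᵀ *ᵥ x))
      ≤ (specNorm S * frobNorm (markovF L A C) ^ 2
          + specNorm (C * A ^ L) ^ 2 * specNorm (gramInf A S)) * vecNorm x ^ 2 := by
  obtain ⟨M, rfl⟩ := Nat.exists_eq_add_of_le hLN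
  rw [sum_range_add, add_mul]
  exact add_le_add (sum_range_dotProduct_mulVec_le_frobNorm A S C x L)
    (sum_range_dotProduct_mulVec_le_gramInf A S C x hS hsum L M)

end LagSums

section Trajectory

variable {Ω : Type*} {n p : ℕ} (A : Matrix (Fin n) (Fin n) ℝ) (B : Matrix (Fin n) (Fin p) ℝ)
  (C : Matrix (Fin p) (Fin n) ℝ) (u : ℕ → Fin p → ℝ) (w : ℕ → Ω → Fin n → ℝ)

def noiselessState : ℕ → Fin n → ℝ
  | 0 => 0
  | t + 1 => A *ᵥ noiselessState t + B *ᵥ u t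

lemma state_eq_noiselessState_add (t : ℕ) (ω : Ω) :
    state A B u w t ω
      = noiselessState A B u t + ∑ j ∈ range t, A ^ j *ᵥ w (t - 1 - j) ω := by
  induction t with
  | zero => simp [state, noiselessState]
  | succ t ih =>
    have hshift : ∀ j ∈ range t,
        A *ᵥ (A ^ j *ᵥ w (t - 1 - j) ω) = A ^ (j + 1) *ᵥ w (t + 1 - 1 - (j + 1)) ω :=
      fun j _ => by rw [mulVec_mulVec, ← pow_succ', Nat.add_sub_cancel, Nat.sub_sub, add_comm 1]
    rw [state, noiselessState]
    beta_reduce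
    rw [ih, mulVec_add, mulVec_sum, sum_congr rfl hshift,
      sum_range_succ']
    simp only [pow_zero, one_mulVec, Nat.add_sub_cancel, Nat.sub_zero]
    abel

lemma dotProduct_mulVec_mul_mulVec {m k l : Type*} [Fintype m] [Fintype k] [Fintype l]
    (x : m → ℝ) (M : Matrix m k ℝ) (N : Matrix k l ℝ) (y : l → ℝ) :
    x ⬝ᵥ (M *ᵥ (N *ᵥ y)) = ((M * N)ᵀ *ᵥ x) ⬝ᵥ y := by
  rw [mulVec_mulVec, dotProduct_mulVec, mulVec_transpose]

lemma vkron_wbar_dotProduct_vecOf_markovF (L t : ℕ) (x : Fin p → ℝ) (ω : Ω) :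
    vkron (wbar L w t ω) x ⬝ᵥ vecOf (markovF L A C)
      = ∑ i ∈ range L, ((C * A ^ i)ᵀ *ᵥ x) ⬝ᵥ w (t - i) ω := by
  rw [← Fin.sum_univ_eq_sum_range (fun i => ((C * A ^ i)ᵀ *ᵥ x) ⬝ᵥ w (t - i) ω)]
  simp only [dotProduct, vkron, vecOf, markovF, wbar, mulVec, transpose_apply,
    Fintype.sum_prod_type, of_apply, sum_mul]
  refine sum_congr rfl fun i _ => sum_congr rfl fun a _ => ?_
  exact sum_congr rfl fun b _ => by ring

lemma zeta_succ_eq (z : ℕ → Ω → ℝ) {L τ : ℕ} (hτ : L ≤ τ) (ω : Ω) :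
    zeta L A B C u w z (τ + 1) ω
      = u (τ + 1) ⬝ᵥ ((C * A ^ L) *ᵥ noiselessState A B u (τ + 1 - L))
        + ∑ i ∈ range (τ + 1), ((C * A ^ i)ᵀ *ᵥ u (τ + 1)) ⬝ᵥ w (τ - i) ω
        + z (τ + 1) ω := by
  have hsplit : ∑ i ∈ range (τ + 1), ((C * A ^ i)ᵀ *ᵥ u (τ + 1)) ⬝ᵥ w (τ - i) ω
      = ∑ i ∈ range L, ((C * A ^ i)ᵀ *ᵥ u (τ + 1)) ⬝ᵥ w (τ - i) ω
        + ∑ j ∈ range (τ + 1 - L),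
            ((C * A ^ L * A ^ j)ᵀ *ᵥ u (τ + 1)) ⬝ᵥ w (τ + 1 - L - 1 - j) ω := by
    rw [← sum_range_add_sum_Ico _ (show L ≤ τ + 1 by omega), sum_Ico_eq_sum_range]
    congr 1
    refine sum_congr rfl fun j _ => ?_
    rw [Matrix.mul_assoc, ← pow_add, show τ + 1 - L - 1 - j = τ - (L + j) by omega]
  rw [hsplit, zeta, Nat.add_sub_cancel, vkron_wbar_dotProduct_vecOf_markovF,
    state_eq_noiselessState_add, mulVec_add, dotProduct_add, mulVec_sum, dotProduct_sum]
  simp only [dotProduct_mulVec_mul_mulVec]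
  ring

end Trajectory

section SecondMoments

variable {Ω : Type*} [MeasurableSpace Ω] {μ : Measure Ω}

lemma integral_dotProduct_sq {k : Type*} [Fintype k] {X : Ω → k → ℝ}
    (hX : ∀ i, MemLp (fun ω => X ω i) 2 μ) (g : k → ℝ) :
    ∫ ω, (g ⬝ᵥ X ω) ^ 2 ∂μ = g ⬝ᵥ (of (fun i j => ∫ ω, X ω i * X ω j ∂μ) *ᵥ g) := by
  have hint : ∀ i j, Integrable (fun ω => X ω i * X ω j) μ := fun i j =>
    (hX i).integrable_mul (hX j)
  have hexpand : ∀ ω, (g ⬝ᵥ X ω) ^ 2 = ∑ i, g i * ∑ j, X ω i * X ω j * g j := fun ω => by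
    rw [sq, dotProduct, sum_mul_sum]
    refine sum_congr rfl fun i _ => ?_
    rw [mul_sum]
    exact sum_congr rfl fun j _ => by ring
  simp only [hexpand]
  simp only [dotProduct, mulVec, of_apply]
  rw [integral_finsetSum _ fun i _ => (integrable_finsetSum _ fun j _ =>
    (hint i j).mul_const _).const_mul _]
  refine sum_congr rfl fun i _ => ?_
  rw [integral_const_mul, integral_finsetSum _ fun j _ => (hint i j).mul_const _]
  simp only [integral_mul_const]

end SecondMoments

namespace NoiseAssumption

variable {Ω : Type*} [MeasurableSpace Ω] {μ : Measure Ω} {n : ℕ} {w : ℕ → Ω → Fin n → ℝ}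
  {z : ℕ → Ω → ℝ} {Sw : Matrix (Fin n) (Fin n) ℝ} {σz : ℝ}
  (hn : NoiseAssumption μ w z Sw σz)
include hn

lemma memLp_w_apply (t : ℕ) (i : Fin n) : MemLp (fun ω => w t ω i) 2 μ :=
  (memLp_two_iff_integrable_sq (hn.meas_w t).eval.aestronglyMeasurable).2 <| by
    simpa only [sq] using hn.int_ww t i i

lemma memLp_z (r : ℕ) : MemLp (z r) 2 μ :=
  (memLp_two_iff_integrable_sq (hn.meas_z r).aestronglyMeasurable).2 (hn.int_zz r)

lemma memLp_dotProduct_w (g : Fin n → ℝ) (t : ℕ) : MemLp (fun ω => g ⬝ᵥ w t ω) 2 μ := by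
  simp only [dotProduct]
  exact memLp_finsetSum _ fun i _ => (hn.memLp_w_apply t i).const_mul (g i)

lemma variance_dotProduct_w (g : Fin n → ℝ) (t : ℕ) :
    Var[fun ω => g ⬝ᵥ w t ω; μ] = g ⬝ᵥ (Sw *ᵥ g) := by
  have hmean : ∫ ω, g ⬝ᵥ w t ω ∂μ = 0 := by
    simp only [dotProduct]
    rw [integral_finsetSum _ fun i _ => (hn.int_w t i).const_mul _]
    simp [integral_const_mul, hn.mean_w]
  have hcov : of (fun i j => ∫ ω, w t ω i * w t ω j ∂μ) = Sw := ext (hn.cov_w t)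
  rw [variance_of_integral_eq_zero (hn.memLp_dotProduct_w g t).aemeasurable hmean,
    integral_dotProduct_sq (hn.memLp_w_apply t), hcov]

lemma variance_z (r : ℕ) : Var[z r; μ] = σz ^ 2 := by
  rw [variance_of_integral_eq_zero (hn.meas_z r).aemeasurable (hn.mean_z r), hn.var_z r]

lemma dotProduct_mulVec_nonneg (x : Fin n → ℝ) : 0 ≤ x ⬝ᵥ (Sw *ᵥ x) :=
  hn.variance_dotProduct_w x 0 ▸ variance_nonneg _ _

lemma indepFun_dotProduct_w {s t : ℕ} (hst : s ≠ t) (g h : Fin n → ℝ) :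
    IndepFun (fun ω => g ⬝ᵥ w s ω) (fun ω => h ⬝ᵥ w t ω) μ :=
  (hn.indep.indepFun (i := Sum.inl s) (j := Sum.inl t) (by simpa using hst)).comp
    (continuous_const.dotProduct continuous_id).measurable
    (continuous_const.dotProduct continuous_id).measurable

lemma indepFun_dotProduct_w_z (g : Fin n → ℝ) (t r : ℕ) :
    IndepFun (fun ω => g ⬝ᵥ w t ω) (z r) μ :=
  (hn.indep.indepFun (i := Sum.inl t) (j := Sum.inr r) Sum.inl_ne_inr).comp
    (continuous_const.dotProduct continuous_id).measurable measurable_id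

variable [IsProbabilityMeasure μ] {ι : Type*} (K : ℝ) (s : Finset ι) (g : ι → Fin n → ℝ)
  (e : ι → ℕ) (r : ℕ)

lemma memLp_const_add_sum_add :
    MemLp (fun ω => K + ∑ i ∈ s, g i ⬝ᵥ w (e i) ω + z r ω) 2 μ :=
  ((memLp_const K).add (memLp_finsetSum s fun i _ => hn.memLp_dotProduct_w (g i) (e i))).add
    (hn.memLp_z r)

lemma variance_const_add_sum_add (he : Set.InjOn e s) :
    Var[fun ω => K + ∑ i ∈ s, g i ⬝ᵥ w (e i) ω + z r ω; μ]
      = ∑ i ∈ s, g i ⬝ᵥ (Sw *ᵥ g i) + σz ^ 2 := by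
  let Y : Option ι → Ω → ℝ := fun o => o.elim (z r) fun i ω => g i ⬝ᵥ w (e i) ω
  have hY : ∀ o, MemLp (Y o) 2 μ := by
    rintro (_ | i)
    exacts [hn.memLp_z r, hn.memLp_dotProduct_w (g i) (e i)]
  have hpair : Set.Pairwise ↑(insertNone s) fun o o' => IndepFun (Y o) (Y o') μ := by
    rintro (_ | i) hi (_ | j) hj hij
    · exact absurd rfl hij
    · exact (hn.indepFun_dotProduct_w_z _ _ _).symm
    · exact hn.indepFun_dotProduct_w_z _ _ _
    · exact hn.indepFun_dotProduct_w (he.ne (some_mem_insertNone.1 hi)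
        (some_mem_insertNone.1 hj) fun h => hij (congrArg some h)) _ _
  have hsum : (fun ω => K + ∑ i ∈ s, g i ⬝ᵥ w (e i) ω + z r ω)
      = fun ω => K + (∑ o ∈ insertNone s, Y o) ω := by
    funext ω
    rw [Finset.sum_apply, sum_insertNone]
    simp only [Y, Option.elim]
    ring
  rw [hsum, variance_const_add (memLp_finsetSum' _ fun o _ => hY o).aestronglyMeasurable,
    IndepFun.variance_sum (fun o _ => hY o) hpair, sum_insertNone]
  simp only [Y, Option.elim, hn.variance_z, hn.variance_dotProduct_w]
  ring

end NoiseAssumption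

theorem effective_noise_variance_bound_general
    {Ω : Type*} [MeasurableSpace Ω] (μ : Measure Ω) [IsProbabilityMeasure μ]
    {n p L : ℕ}
    (A : Matrix (Fin n) (Fin n) ℝ) (B : Matrix (Fin n) (Fin p) ℝ)
    (C : Matrix (Fin p) (Fin n) ℝ)
    (u : ℕ → Fin p → ℝ) (w : ℕ → Ω → Fin n → ℝ) (z : ℕ → Ω → ℝ)
    (Sw : Matrix (Fin n) (Fin n) ℝ) (σz : ℝ)
    (hnoise : NoiseAssumption μ w z Sw σz)
    (ρ φ : ℝ) (hρ : ρ ∈ Set.Ioo (0 : ℝ) 1)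
    (hstab : ∀ k : ℕ, specNorm (A ^ k) ≤ φ * ρ ^ k)
    (β : ℝ) (hu : ∀ t, vecNorm (u t) ≤ β)
    (τ : ℕ) (hτ : L ≤ τ) :
    ∫ ω, zeta L A B C u w z (τ + 1) ω ^ 2 ∂μ
        - (∫ ω, zeta L A B C u w z (τ + 1) ω ∂μ) ^ 2 ≤
      (specNorm Sw * frobNorm (markovF L A C) ^ 2
          + specNorm (C * A ^ L) ^ 2 * specNorm (gramInf A Sw)) * β ^ 2
        + σz ^ 2 := by
  set x := u (τ + 1)
  have hζ := funext (zeta_succ_eq A B C u w z hτ)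
  have hinj : Set.InjOn (τ - ·) (range (τ + 1) : Set ℕ) := fun i hi j hj hij => by
    simp only [coe_range, Set.mem_Iio] at hi hj
    simp only at hij
    omega
  have hmem : MemLp (zeta L A B C u w z (τ + 1)) 2 μ :=
    hζ ▸ hnoise.memLp_const_add_sum_add _ _ _ _ _
  have hsum := summable_pow_mul_mul_transpose hρ.1.le hρ.2 hstab Sw
  have hcoef : 0 ≤ specNorm Sw * frobNorm (markovF L A C) ^ 2
      + specNorm (C * A ^ L) ^ 2 * specNorm (gramInf A Sw) :=
    add_nonneg (mul_nonneg (specNorm_nonneg _) (sq_nonneg _))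
      (mul_nonneg (sq_nonneg _) (specNorm_nonneg _))
  calc _ = Var[zeta L A B C u w z (τ + 1); μ] := (variance_eq_sub hmem).symm
    _ = ∑ i ∈ range (τ + 1), ((C * A ^ i)ᵀ *ᵥ x) ⬝ᵥ (Sw *ᵥ ((C * A ^ i)ᵀ *ᵥ x))
          + σz ^ 2 := by
      rw [hζ, hnoise.variance_const_add_sum_add _ _ _ _ _ hinj]
    _ ≤ (specNorm Sw * frobNorm (markovF L A C) ^ 2
          + specNorm (C * A ^ L) ^ 2 * specNorm (gramInf A Sw)) * vecNorm x ^ 2 + σz ^ 2 := by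
      gcongr
      exact sum_range_dotProduct_mulVec_le A Sw C x hnoise.dotProduct_mulVec_nonneg hsum
        (by omega)
    _ ≤ _ := by
      gcongr
      exacts [vecNorm_nonneg x, hu _]

/-- **Variance bound for the effective noise.** For every `τ ≥ L`,
`Var(ζ_{τ+1}) ≤ (‖Σ_w‖ ‖F‖_F² + ‖C Aᴸ‖² ‖Γ_w^∞‖) β² + σ_z²`. -/
theorem effective_noise_variance_bound
    {Ω : Type*} [MeasurableSpace Ω] (μ : Measure Ω) [IsProbabilityMeasure μ]
    {n p L : ℕ} (hL : 1 ≤ L)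
    (A : Matrix (Fin n) (Fin n) ℝ) (B : Matrix (Fin n) (Fin p) ℝ)
    (C : Matrix (Fin p) (Fin n) ℝ)
    (u : ℕ → Fin p → ℝ) (w : ℕ → Ω → Fin n → ℝ) (z : ℕ → Ω → ℝ)
    (Sw : Matrix (Fin n) (Fin n) ℝ) (σz : ℝ)
    (hnoise : NoiseAssumption μ w z Sw σz)
    (ρ φ : ℝ) (hρ : ρ ∈ Set.Ioo (0 : ℝ) 1) (hφ : 1 ≤ φ)
    (hstab : ∀ k : ℕ, specNorm (A ^ k) ≤ φ * ρ ^ k)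
    (β : ℝ) (hu : ∀ t, vecNorm (u t) ≤ β)
    (τ : ℕ) (hτ : L ≤ τ) :
    ∫ ω, zeta L A B C u w z (τ + 1) ω ^ 2 ∂μ
        - (∫ ω, zeta L A B C u w z (τ + 1) ω ∂μ) ^ 2 ≤
      (specNorm Sw * frobNorm (markovF L A C) ^ 2
          + specNorm (C * A ^ L) ^ 2 * specNorm (gramInf A Sw)) * β ^ 2
        + σz ^ 2 :=
  effective_noise_variance_bound_general μ A B C u w z Sw σz hnoise ρ φ hρ hstab β hu τ hτ
end
end

section
/- Let u and v be independent standard Gaussian random vectors in ℝᵖ (each with i.i.d. N(0,1) coordinates) and let M ∈ ℝ^{p×p}. Then E[(uᵀ M v)⁴] = 3 (tr(M Mᵀ))² + 6 tr((M Mᵀ)²), and in particular E[(uᵀ M v)⁴] ≤ 9 ‖M‖_F⁴. -/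
/-!
Conditionally on `v`, the form `uᵀMv = u ⬝ᵥ Mv` is a centred Gaussian of variance `‖Mv‖²`, so
its fourth moment is `3‖Mv‖⁴`, the fourth derivative at `0` of the mgf `exp (‖Mv‖² t² / 2)`.
Writing `‖Mv‖² = ∑ₖ (v ⬝ᵥ mₖ)²` over the rows `mₖ` of `M`, it remains to compute
`E[(v ⬝ᵥ a)² (v ⬝ᵥ b)²] = ‖a‖²‖b‖² + 2 (a ⬝ᵥ b)²`, which follows from `E[(v ⬝ᵥ w)⁴] = 3‖w‖⁴`
by polarization in `w = a ± b`. The bound is `tr((MMᵀ)²) ≤ (tr MMᵀ)²`, i.e. Cauchy–Schwarz for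
the rows of `M`.
-/

open MeasureTheory ProbabilityTheory Matrix Finset

noncomputable section

open Real WithLp
open scoped NNReal

lemma deriv_mul_exp_mul_sq_div_two (c : ℝ) {q q' r : ℝ → ℝ} (hq : ∀ t, HasDerivAt q (q' t) t)
    (hr : ∀ t, q' t + c * t * q t = r t) :
    deriv (fun t => q t * rexp (c * t ^ 2 / 2)) = fun t => r t * rexp (c * t ^ 2 / 2) := by
  funext t
  have he := (((hasDerivAt_pow 2 t).const_mul c).div_const 2).exp
  refine ((hq t).mul he).deriv.trans ?_
  rw [← hr]
  push_cast
  ring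

lemma iteratedDeriv_four_exp_mul_sq_div_two_zero (c : ℝ) :
    iteratedDeriv 4 (fun t => rexp (c * t ^ 2 / 2)) 0 = 3 * c ^ 2 := by
  have h1 : (fun t => rexp (c * t ^ 2 / 2)) = fun t => 1 * rexp (c * t ^ 2 / 2) := by simp
  rw [h1, iteratedDeriv_succ', iteratedDeriv_succ', iteratedDeriv_succ', iteratedDeriv_succ',
    iteratedDeriv_zero,
    deriv_mul_exp_mul_sq_div_two c (r := fun t => c * t) (fun t => hasDerivAt_const t 1)
      (fun t => by ring),
    deriv_mul_exp_mul_sq_div_two c (q := fun t => c * t) (r := fun t => c + c ^ 2 * t ^ 2)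
      (fun t => (hasDerivAt_id' t).const_mul c) (fun t => by ring),
    deriv_mul_exp_mul_sq_div_two c (q := fun t => c + c ^ 2 * t ^ 2)
      (r := fun t => 3 * c ^ 2 * t + c ^ 3 * t ^ 3)
      (fun t => ((hasDerivAt_pow 2 t).const_mul (c ^ 2)).const_add c) (fun t => by ring),
    deriv_mul_exp_mul_sq_div_two c (q := fun t => 3 * c ^ 2 * t + c ^ 3 * t ^ 3)
      (r := fun t => 3 * c ^ 2 + 6 * c ^ 3 * t ^ 2 + c ^ 4 * t ^ 4)
      (fun t => ((hasDerivAt_id' t).const_mul (3 * c ^ 2)).add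
        ((hasDerivAt_pow 3 t).const_mul (c ^ 3))) (fun t => by push_cast; ring)]
  simp

namespace ProbabilityTheory

lemma integral_pow_four_gaussianReal (v : ℝ≥0) :
    ∫ x, x ^ 4 ∂gaussianReal 0 v = 3 * (v : ℝ) ^ 2 := by
  have h := iteratedDeriv_mgf_zero (X := id) (μ := gaussianReal 0 v)
    (by simp [integrableExpSet_id_gaussianReal]) 4
  simp only [mgf_id_gaussianReal, zero_mul, zero_add,
    iteratedDeriv_four_exp_mul_sq_div_two_zero] at h
  simpa using h.symm

lemma IndepFun.integral_comp_eq_integral_prod_map {Ω α β : Type*} [MeasurableSpace Ω]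
    [MeasurableSpace α] [MeasurableSpace β] {μ : Measure Ω} [IsFiniteMeasure μ]
    {X : Ω → α} {Y : Ω → β} (h : IndepFun X Y μ) (hX : AEMeasurable X μ) (hY : AEMeasurable Y μ)
    {g : α × β → ℝ} (hg : AEStronglyMeasurable g ((μ.map X).prod (μ.map Y))) :
    ∫ ω, g (X ω, Y ω) ∂μ = ∫ z, g z ∂((μ.map X).prod (μ.map Y)) := by
  rw [← h.map_prod_eq_prod_map_map hX hY] at hg ⊢
  exact (integral_map (hX.prodMk hY) hg).symm

section StandardGaussianVector

variable {ι : Type*} [Fintype ι]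

lemma map_dotProduct_pi_gaussianReal (w : ι → ℝ) :
    (Measure.pi fun _ : ι => gaussianReal 0 1).map (fun x => x ⬝ᵥ w) =
      gaussianReal 0 (w ⬝ᵥ w).toNNReal := by
  set L : StrongDual ℝ (EuclideanSpace ℝ ι) := innerSL ℝ (toLp 2 w)
  have hL : (fun x : ι → ℝ => x ⬝ᵥ w) = L ∘ toLp 2 := by
    funext x
    simp [L, dotProduct, PiLp.inner_apply, mul_comm]
  rw [hL, ← Measure.map_map L.continuous.measurable (by fun_prop), map_pi_eq_stdGaussian,
    IsGaussian.map_eq_gaussianReal, integral_strongDual_stdGaussian, variance_dual_stdGaussian,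
    innerSL_apply_norm, EuclideanSpace.real_norm_sq_eq]
  simp [dotProduct, sq]

lemma integrable_dotProduct_pow_four_pi_gaussianReal (w : ι → ℝ) :
    Integrable (fun x => (x ⬝ᵥ w) ^ 4) (Measure.pi fun _ : ι => gaussianReal 0 1) := by
  have h : Integrable (fun t : ℝ => t ^ 4) (gaussianReal 0 (w ⬝ᵥ w).toNNReal) := by
    simpa [Even.pow_abs ⟨2, rfl⟩] using
      (memLp_id_gaussianReal (μ := 0) (v := (w ⬝ᵥ w).toNNReal) 4).integrable_norm_pow'
  rw [← map_dotProduct_pi_gaussianReal] at h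
  exact h.comp_measurable (by fun_prop)

lemma integral_dotProduct_pow_four_pi_gaussianReal (w : ι → ℝ) :
    ∫ x, (x ⬝ᵥ w) ^ 4 ∂(Measure.pi fun _ : ι => gaussianReal 0 1) = 3 * (w ⬝ᵥ w) ^ 2 := by
  have hw : 0 ≤ w ⬝ᵥ w := by simpa using dotProduct_self_star_nonneg w
  rw [← integral_map (φ := fun x => x ⬝ᵥ w) (f := fun t => t ^ 4) (by fun_prop) (by fun_prop),
    map_dotProduct_pi_gaussianReal, integral_pow_four_gaussianReal, Real.coe_toNNReal _ hw]

lemma sq_dotProduct_mul_sq_dotProduct_eq (a b x : ι → ℝ) :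
    (x ⬝ᵥ a) ^ 2 * (x ⬝ᵥ b) ^ 2 =
      ((x ⬝ᵥ (a + b)) ^ 4 + (x ⬝ᵥ (a - b)) ^ 4 - 2 * (x ⬝ᵥ a) ^ 4 - 2 * (x ⬝ᵥ b) ^ 4) / 12 := by
  rw [dotProduct_add, dotProduct_sub]
  ring

lemma integrable_sq_dotProduct_mul_sq_dotProduct_pi_gaussianReal (a b : ι → ℝ) :
    Integrable (fun x => (x ⬝ᵥ a) ^ 2 * (x ⬝ᵥ b) ^ 2)
      (Measure.pi fun _ : ι => gaussianReal 0 1) := by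
  have h4 := integrable_dotProduct_pow_four_pi_gaussianReal (ι := ι)
  simp_rw [sq_dotProduct_mul_sq_dotProduct_eq a b]
  fun_prop

lemma integral_sq_dotProduct_mul_sq_dotProduct_pi_gaussianReal (a b : ι → ℝ) :
    ∫ x, (x ⬝ᵥ a) ^ 2 * (x ⬝ᵥ b) ^ 2 ∂(Measure.pi fun _ : ι => gaussianReal 0 1) =
      (a ⬝ᵥ a) * (b ⬝ᵥ b) + 2 * (a ⬝ᵥ b) ^ 2 := by
  have h4 := integrable_dotProduct_pow_four_pi_gaussianReal (ι := ι)
  simp_rw [sq_dotProduct_mul_sq_dotProduct_eq a b]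
  rw [integral_div, integral_sub, integral_sub, integral_add, integral_const_mul,
    integral_const_mul]
  · simp only [integral_dotProduct_pow_four_pi_gaussianReal]
    simp only [add_dotProduct, dotProduct_add, sub_dotProduct, dotProduct_sub, dotProduct_comm b a]
    ring
  all_goals fun_prop

variable {κ : Type*} [Fintype κ]

lemma integrable_sum_sq_dotProduct_sq_pi_gaussianReal (r : κ → ι → ℝ) :
    Integrable (fun x => (∑ k, (x ⬝ᵥ r k) ^ 2) ^ 2) (Measure.pi fun _ : ι => gaussianReal 0 1) := by
  simp_rw [sq (∑ k, _), Finset.sum_mul_sum]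
  exact integrable_finsetSum _ fun k _ => integrable_finsetSum _ fun l _ =>
    integrable_sq_dotProduct_mul_sq_dotProduct_pi_gaussianReal _ _

lemma integral_sum_sq_dotProduct_sq_pi_gaussianReal (r : κ → ι → ℝ) :
    ∫ x, (∑ k, (x ⬝ᵥ r k) ^ 2) ^ 2 ∂(Measure.pi fun _ : ι => gaussianReal 0 1) =
      (∑ k, r k ⬝ᵥ r k) ^ 2 + 2 * ∑ k, ∑ l, (r k ⬝ᵥ r l) ^ 2 := by
  have hint := integrable_sq_dotProduct_mul_sq_dotProduct_pi_gaussianReal (ι := ι)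
  simp_rw [sq (∑ k, _), Finset.sum_mul_sum]
  rw [integral_finsetSum _ fun k _ => integrable_finsetSum _ fun l _ => hint _ _]
  simp_rw [integral_finsetSum _ fun l _ => hint _ _,
    integral_sq_dotProduct_mul_sq_dotProduct_pi_gaussianReal, Finset.mul_sum,
    ← Finset.sum_add_distrib]

end StandardGaussianVector

end ProbabilityTheory

section Gram

variable {m n : Type*} [Fintype m] [Fintype n]

lemma dotProduct_sq_le_dotProduct_self_mul (a b : n → ℝ) : (a ⬝ᵥ b) ^ 2 ≤ (a ⬝ᵥ a) * (b ⬝ᵥ b) := by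
  simpa only [dotProduct, sq] using Finset.sum_mul_sq_le_sq_mul_sq univ a b

lemma dotProduct_mulVec_self_eq_sum (M : Matrix m n ℝ) (x : n → ℝ) :
    (M *ᵥ x) ⬝ᵥ (M *ᵥ x) = ∑ k, (x ⬝ᵥ M k) ^ 2 := by
  simp only [dotProduct, mulVec, sq, mul_comm (x _)]

lemma trace_mul_transpose_eq_sum_dotProduct (M : Matrix m n ℝ) :
    (M * Mᵀ).trace = ∑ k, M k ⬝ᵥ M k := by
  simp [Matrix.trace, Matrix.mul_apply', dotProduct]

lemma trace_mul_transpose_sq_eq_sum_dotProduct_sq [DecidableEq m] (M : Matrix m n ℝ) :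
    ((M * Mᵀ) ^ 2).trace = ∑ k, ∑ l, (M k ⬝ᵥ M l) ^ 2 := by
  simp only [Matrix.trace, sq, diag_apply, Matrix.mul_apply']
  refine Finset.sum_congr rfl fun k _ => Finset.sum_congr rfl fun l _ => ?_
  simp [Matrix.mul_apply', dotProduct_comm]

lemma trace_mul_transpose_sq_le [DecidableEq m] (M : Matrix m n ℝ) :
    ((M * Mᵀ) ^ 2).trace ≤ (M * Mᵀ).trace ^ 2 := by
  rw [trace_mul_transpose_sq_eq_sum_dotProduct_sq, trace_mul_transpose_eq_sum_dotProduct, sq,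
    Finset.sum_mul_sum]
  exact Finset.sum_le_sum fun k _ => Finset.sum_le_sum fun l _ =>
    dotProduct_sq_le_dotProduct_self_mul _ _

lemma frobNorm_sq_s18 (M : Matrix m n ℝ) : frobNorm M ^ 2 = (M * Mᵀ).trace := by
  rw [frobNorm, Real.sq_sqrt (by positivity), trace_mul_transpose_eq_sum_dotProduct]
  simp [dotProduct, sq]

end Gram

namespace ProbabilityTheory

lemma integral_dotProduct_mulVec_pow_four_prod_pi_gaussianReal {m n : Type*} [Fintype m]
    [Fintype n] [DecidableEq m] (M : Matrix m n ℝ) :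
    ∫ z, (z.1 ⬝ᵥ M *ᵥ z.2) ^ 4 ∂((Measure.pi fun _ : m => gaussianReal 0 1).prod
        (Measure.pi fun _ : n => gaussianReal 0 1)) =
      3 * (M * Mᵀ).trace ^ 2 + 6 * ((M * Mᵀ) ^ 2).trace := by
  have hinner : ∀ y, ∫ x, (x ⬝ᵥ M *ᵥ y) ^ 4 ∂(Measure.pi fun _ : m => gaussianReal 0 1) =
      3 * (∑ k, (y ⬝ᵥ M k) ^ 2) ^ 2 := fun y => by
    rw [integral_dotProduct_pow_four_pi_gaussianReal, dotProduct_mulVec_self_eq_sum]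
  have hint : Integrable (fun z : (m → ℝ) × (n → ℝ) => (z.1 ⬝ᵥ M *ᵥ z.2) ^ 4)
      ((Measure.pi fun _ : m => gaussianReal 0 1).prod
        (Measure.pi fun _ : n => gaussianReal 0 1)) := by
    refine (integrable_prod_iff' (by fun_prop)).2 ⟨ae_of_all _ fun y =>
      integrable_dotProduct_pow_four_pi_gaussianReal (M *ᵥ y), ?_⟩
    simp_rw [Real.norm_eq_abs, abs_pow, Even.pow_abs (by decide : Even 4), hinner]
    exact (integrable_sum_sq_dotProduct_sq_pi_gaussianReal _).const_mul 3
  rw [integral_prod_symm _ hint]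
  simp_rw [hinner]
  rw [integral_const_mul, integral_sum_sq_dotProduct_sq_pi_gaussianReal M,
    ← trace_mul_transpose_eq_sum_dotProduct, ← trace_mul_transpose_sq_eq_sum_dotProduct_sq]
  ring

end ProbabilityTheory

theorem gaussian_bilinear_fourth_moment_general
    {Ω : Type*} [MeasurableSpace Ω] (μ : Measure Ω) [IsProbabilityMeasure μ]
    {p : ℕ}
    (u v : Ω → Fin p → ℝ)
    (hmu : Measurable u) (hmv : Measurable v)
    (hindep : IndepFun u v μ)
    (hlawu : Measure.map u μ =
      Measure.pi (fun _ : Fin p => ProbabilityTheory.gaussianReal 0 1))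
    (hlawv : Measure.map v μ =
      Measure.pi (fun _ : Fin p => ProbabilityTheory.gaussianReal 0 1))
    (M : Matrix (Fin p) (Fin p) ℝ) :
    (∫ ω, (u ω ⬝ᵥ (M *ᵥ v ω)) ^ 4 ∂μ) =
        3 * (M * Mᵀ).trace ^ 2 + 6 * ((M * Mᵀ) ^ 2).trace ∧
      (∫ ω, (u ω ⬝ᵥ (M *ᵥ v ω)) ^ 4 ∂μ) ≤ 9 * frobNorm M ^ 4 := by
  have hmoment : ∫ ω, (u ω ⬝ᵥ (M *ᵥ v ω)) ^ 4 ∂μ =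
      3 * (M * Mᵀ).trace ^ 2 + 6 * ((M * Mᵀ) ^ 2).trace := by
    rw [hindep.integral_comp_eq_integral_prod_map (g := fun z => (z.1 ⬝ᵥ M *ᵥ z.2) ^ 4)
      hmu.aemeasurable hmv.aemeasurable (by fun_prop), hlawu, hlawv,
      integral_dotProduct_mulVec_pow_four_prod_pi_gaussianReal]
  refine ⟨hmoment, ?_⟩
  rw [hmoment, show frobNorm M ^ 4 = (frobNorm M ^ 2) ^ 2 by ring, frobNorm_sq_s18]
  linarith [trace_mul_transpose_sq_le M]

/-- **Fourth moment of a Gaussian bilinear form.** For independent standard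
Gaussian vectors `u, v` in `ℝᵖ` and `M ∈ ℝ^{p×p}`:
`E[(uᵀMv)⁴] = 3(tr(MMᵀ))² + 6 tr((MMᵀ)²) ≤ 9‖M‖_F⁴`. -/
theorem gaussian_bilinear_fourth_moment
    {Ω : Type*} [MeasurableSpace Ω] (μ : Measure Ω) [IsProbabilityMeasure μ]
    {p : ℕ} (hp : 1 ≤ p)
    (u v : Ω → Fin p → ℝ)
    (hmu : Measurable u) (hmv : Measurable v)
    (hindep : IndepFun u v μ)
    (hlawu : Measure.map u μ =
      Measure.pi (fun _ : Fin p => ProbabilityTheory.gaussianReal 0 1))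
    (hlawv : Measure.map v μ =
      Measure.pi (fun _ : Fin p => ProbabilityTheory.gaussianReal 0 1))
    (M : Matrix (Fin p) (Fin p) ℝ) :
    (∫ ω, (u ω ⬝ᵥ (M *ᵥ v ω)) ^ 4 ∂μ) =
        3 * (M * Mᵀ).trace ^ 2 + 6 * ((M * Mᵀ) ^ 2).trace ∧
      (∫ ω, (u ω ⬝ᵥ (M *ᵥ v ω)) ^ 4 ∂μ) ≤ 9 * frobNorm M ^ 4 :=
  gaussian_bilinear_fourth_moment_general μ u v hmu hmv hindep hlawu hlawv M
end
end
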